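/- arXiv:1008.3775 — 3 statements merged into one kernel-verified Lean document; each statement's English description precedes it below -/
import Mathlib

section
/- Let n ≥ 1, let P be an n×n real row-stochastic matrix, let c ∈ [0,1), set Z := (I − cP)^{-1} with entries z_{ij}, and for each u ∈ {1,…,n} let π_j(u) := (1−c) z_{uj}. Let Z_dg be the diagonal matrix whose diagonal is the diagonal of Z. Then for all s, k ∈ {1,…,n}: (1−c)^2 · ( [Z(2Z_dg − I)]_{sk} − z_{sk}^2 ) = π_k(s) · ( 2π_k(k) − (1−c) − π_k(s) ). In particular, the variance of the MC Complete Path estimator based on m runs equals (1/m) · π_k(s)(2π_k(k) − (1−c) − π_k(s)). -/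
open Matrix

/-- With `Z := (I - cP)⁻¹`, `π_j(u) := (1-c) z_{uj}`, and `Z_dg` the
diagonal matrix whose diagonal is that of `Z`, we have for all `s, k`:
`(1-c)² ([Z(2 Z_dg - I)]_{sk} - z_{sk}²) = π_k(s) (2 π_k(k) - (1-c) - π_k(s))`.
In particular, the variance of the MC Complete Path estimator based on `m` runs,
namely `((1-c)²/m) ([Z(2 Z_dg - I)]_{sk} - z_{sk}²)`, equals
`(1/m) π_k(s) (2 π_k(k) - (1-c) - π_k(s))`. -/
theorem mc_complete_path_variance
    (n : ℕ) (hn : 1 ≤ n) (P : Matrix (Fin n) (Fin n) ℝ)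
    (hP_nonneg : ∀ i j, 0 ≤ P i j) (hP_row : ∀ i, ∑ j, P i j = 1)
    (c : ℝ) (hc : c ∈ Set.Ico (0 : ℝ) 1) :
    let Z : Matrix (Fin n) (Fin n) ℝ := ((1 : Matrix (Fin n) (Fin n) ℝ) - c • P)⁻¹
    let Zdg : Matrix (Fin n) (Fin n) ℝ := Matrix.diagonal (fun i => Z i i)
    let pr : Fin n → Fin n → ℝ := fun u j => (1 - c) * Z u j  -- π_j(u)
    ∀ s k : Fin n,
      (1 - c) ^ 2 * ((Z * (2 • Zdg - (1 : Matrix (Fin n) (Fin n) ℝ))) s k - (Z s k) ^ 2)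
        = pr s k * (2 * pr k k - (1 - c) - pr s k) ∧
      ∀ m : ℕ, 0 < m →
        ((1 - c) ^ 2 / m) * ((Z * (2 • Zdg - (1 : Matrix (Fin n) (Fin n) ℝ))) s k - (Z s k) ^ 2)
          = (1 / m) * (pr s k * (2 * pr k k - (1 - c) - pr s k)) := by
  intro Z Zdg pr s k
  have key : (Z * (2 • Zdg - (1 : Matrix (Fin n) (Fin n) ℝ))) s k
      = 2 * Z s k * Z k k - Z s k := by
    rw [two_smul]
    simp only [Matrix.mul_apply, Matrix.sub_apply, Matrix.smul_apply, Matrix.one_apply,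
      Matrix.diagonal_apply, Zdg, smul_eq_mul, Matrix.add_apply, mul_add, Finset.sum_add_distrib, mul_sub, mul_ite, mul_one, mul_zero,
      Finset.sum_sub_distrib, Finset.sum_ite_eq', Finset.mem_univ, if_true]
    ring
  constructor
  · rw [key]; simp only [pr]; ring
  · intro m hm
    rw [key]; simp only [pr]; ring
end

section
/- Let n > k ≥ 1, let m > 0 and a > 0 be reals with y := ma an integer, y > 1, let ε ∈ (1/y, 1), and let π_{k+1}, …, π_n be positive reals with π_{k+1} = (1−ε)a, π_j ≤ π_{k+1} for all j > k, and ∑_{j=k+1}^n π_j ≤ 1. For j > k let Y_j be a Poisson random variable with parameter m π_j. Then μ(y) := ∑_{j=k+1}^{n} P( Y_j ≥ y ) ≤ (1 / (ε π_{k+1})) · ( (1−ε) e^{ε} )^{ma}. -/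
open MeasureTheory

private lemma fact_mul_pow_le (y i : ℕ) :
    (y.factorial : ℝ) * (y : ℝ) ^ i ≤ ((y + i).factorial : ℝ) := by
  induction i with
  | zero => simp
  | succ i ih =>
    have h0 : (0:ℝ) ≤ (y:ℝ) := by positivity
    have h1 : ((y + i).factorial : ℝ) * (y:ℝ) ≤ ((y + i).factorial : ℝ) * ((y:ℝ) + i + 1) := by
      apply mul_le_mul_of_nonneg_left _ (by positivity)
      linarith [Nat.cast_nonneg (α := ℝ) i]
    calc (y.factorial : ℝ) * (y:ℝ) ^ (i + 1)
        = (y.factorial : ℝ) * (y:ℝ) ^ i * (y:ℝ) := by ring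
      _ ≤ ((y + i).factorial : ℝ) * (y:ℝ) := mul_le_mul_of_nonneg_right ih h0
      _ ≤ ((y + i).factorial : ℝ) * ((y:ℝ) + i + 1) := h1
      _ = ((y + (i + 1)).factorial : ℝ) := by
          have h2 : y + (i + 1) = (y + i) + 1 := by omega
          rw [h2, Nat.factorial_succ]; push_cast; ring

private lemma pow_mul_exp_neg_mono (N : ℕ) (t1 t2 : ℝ) (h1 : 0 < t1) (h12 : t1 ≤ t2)
    (h2 : t2 ≤ N) : t1 ^ N * Real.exp (-t1) ≤ t2 ^ N * Real.exp (-t2) := by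
  have h2pos : 0 < t2 := lt_of_lt_of_le h1 h12
  have hlog : Real.log (t1 / t2) ≤ t1 / t2 - 1 := Real.log_le_sub_one_of_pos (by positivity)
  have hlog2 : Real.log t1 - Real.log t2 ≤ (t1 - t2) / t2 := by
    rw [Real.log_div (ne_of_gt h1) (ne_of_gt h2pos)] at hlog
    have h : t1 / t2 - 1 = (t1 - t2) / t2 := by field_simp
    linarith
  have hN : (0:ℝ) < N := lt_of_lt_of_le h2pos h2
  have hNd : (1:ℝ) ≤ (N:ℝ) / t2 := (one_le_div h2pos).mpr h2
  have h3 : (N:ℝ) * (Real.log t1 - Real.log t2) ≤ t1 - t2 := by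
    calc (N:ℝ) * (Real.log t1 - Real.log t2) ≤ (N:ℝ) * ((t1 - t2) / t2) :=
          mul_le_mul_of_nonneg_left hlog2 hN.le
      _ = (t1 - t2) * ((N:ℝ) / t2) := by ring
      _ ≤ (t1 - t2) * 1 := mul_le_mul_of_nonpos_left hNd (by linarith)
      _ = t1 - t2 := by ring
  have key : (N:ℝ) * Real.log t1 - t1 ≤ (N:ℝ) * Real.log t2 - t2 := by linarith
  have e1 : ∀ t : ℝ, 0 < t → t ^ N * Real.exp (-t) = Real.exp ((N:ℝ) * Real.log t - t) := by
    intro t ht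
    rw [Real.exp_sub, Real.exp_nat_mul, Real.exp_log ht, div_eq_mul_inv, ← Real.exp_neg]
  rw [e1 t1 h1, e1 t2 h2pos]
  exact Real.exp_le_exp.mpr key

private lemma pow_div_fact_le_exp (y : ℕ) : (y:ℝ) ^ y / y.factorial ≤ Real.exp y := by
  have h := Real.sum_le_exp_of_nonneg (x := (y:ℝ)) (by positivity) (y + 1)
  have h2 : (y:ℝ) ^ y / y.factorial ≤ ∑ i ∈ Finset.range (y + 1), (y:ℝ) ^ i / i.factorial :=
    Finset.single_le_sum (f := fun i => (y:ℝ) ^ i / (i.factorial : ℝ))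
      (fun i _ => by positivity) (Finset.self_mem_range_succ y)
  exact h2.trans h

private lemma poisson_tail_le {Ω : Type*} [MeasurableSpace Ω] (μ : Measure Ω)
    [IsProbabilityMeasure μ] (Y : Ω → ℕ) (lam : ℝ) (hlam : 0 < lam)
    (y : ℕ) (hy : 0 < y) (c : ℝ) (hc0 : 0 ≤ c) (hc1 : c < 1)
    (hlamy : lam ≤ c * y)
    (hp : ∀ i, (μ {ω | Y ω = i}).toReal = lam ^ i / i.factorial * Real.exp (-lam)) :
    (μ {ω | y ≤ Y ω}).toReal ≤ lam ^ y / y.factorial * Real.exp (-lam) * (1 / (1 - c)) := by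
  have hfacpos2 : (0:ℝ) < (y.factorial : ℝ) := Nat.cast_pos.mpr y.factorial_pos
  set p0 : ℝ := lam ^ y / y.factorial * Real.exp (-lam) with hp0
  have hp0pos : 0 < p0 := by
    rw [hp0]; exact mul_pos (div_pos (pow_pos hlam y) hfacpos2) (Real.exp_pos _)
  have hbound : ∀ i : ℕ, lam ^ (y + i) / (y + i).factorial * Real.exp (-lam) ≤ p0 * c ^ i := by
    intro i
    have hfac : (y.factorial : ℝ) * (y:ℝ) ^ i ≤ ((y + i).factorial : ℝ) := fact_mul_pow_le y i
    have hnum : lam ^ (y + i) ≤ lam ^ y * c ^ i * (y:ℝ) ^ i := by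
      rw [pow_add]
      have h : lam ^ i ≤ (c * y) ^ i := pow_le_pow_left₀ hlam.le hlamy i
      calc lam ^ y * lam ^ i ≤ lam ^ y * (c * y) ^ i :=
            mul_le_mul_of_nonneg_left h (pow_nonneg hlam.le y)
        _ = lam ^ y * c ^ i * (y:ℝ) ^ i := by rw [mul_pow]; ring
    have hfacpos : (0:ℝ) < ((y + i).factorial : ℝ) := Nat.cast_pos.mpr (y + i).factorial_pos
    have h1 : lam ^ (y + i) / (y + i).factorial ≤ lam ^ y / y.factorial * c ^ i := by
      rw [div_le_iff₀ hfacpos]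
      calc lam ^ (y + i) ≤ lam ^ y * c ^ i * (y:ℝ) ^ i := hnum
        _ = (lam ^ y / y.factorial * c ^ i) * ((y.factorial : ℝ) * (y:ℝ) ^ i) := by
            field_simp
        _ ≤ (lam ^ y / y.factorial * c ^ i) * ((y + i).factorial : ℝ) :=
            mul_le_mul_of_nonneg_left hfac
              (mul_nonneg (div_nonneg (pow_nonneg hlam.le y) hfacpos2.le) (pow_nonneg hc0 i))
    calc lam ^ (y + i) / (y + i).factorial * Real.exp (-lam)
        ≤ lam ^ y / y.factorial * c ^ i * Real.exp (-lam) :=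
          mul_le_mul_of_nonneg_right h1 (Real.exp_pos _).le
      _ = p0 * c ^ i := by rw [hp0]; ring
  have hsub : {ω | y ≤ Y ω} ⊆ ⋃ i : ℕ, {ω | Y ω = y + i} := by
    intro ω hω
    simp only [Set.mem_setOf_eq] at hω
    exact Set.mem_iUnion.mpr ⟨Y ω - y, by simp only [Set.mem_setOf_eq]; omega⟩
  have hsummable : Summable (fun i : ℕ => p0 * c ^ i) :=
    (summable_geometric_of_lt_one hc0 hc1).mul_left p0
  have hle : μ {ω | y ≤ Y ω} ≤ ENNReal.ofReal (p0 * (1 / (1 - c))) := by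
    calc μ {ω | y ≤ Y ω} ≤ μ (⋃ i : ℕ, {ω | Y ω = y + i}) := measure_mono hsub
      _ ≤ ∑' i : ℕ, μ {ω | Y ω = y + i} := measure_iUnion_le _
      _ ≤ ∑' i : ℕ, ENNReal.ofReal (p0 * c ^ i) := by
          apply ENNReal.tsum_le_tsum
          intro i
          have hne : μ {ω | Y ω = y + i} ≠ ⊤ := measure_ne_top μ _
          rw [← ENNReal.ofReal_toReal hne, hp (y + i)]
          exact ENNReal.ofReal_le_ofReal (hbound i)
      _ = ENNReal.ofReal (∑' i : ℕ, p0 * c ^ i) :=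
          (ENNReal.ofReal_tsum_of_nonneg
            (fun i => mul_nonneg hp0pos.le (pow_nonneg hc0 i)) hsummable).symm
      _ = ENNReal.ofReal (p0 * (1 / (1 - c))) := by
          rw [tsum_mul_left, tsum_geometric_of_lt_one hc0 hc1, one_div]
  have h1c : (0:ℝ) < 1 - c := by linarith
  exact ENNReal.toReal_le_of_le_ofReal
    (mul_nonneg hp0pos.le (le_of_lt (by positivity))) hle

/-- **bound on `μ(y)`, inequality (10) of the paper.**
Let `n > k ≥ 1`, `m, a > 0` with `y := ma` an integer `> 1`, `ε ∈ (1/y, 1)`, and let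
`π_{k+1}, …, π_n` be positive reals with `π_{k+1} = (1-ε) a`, `π_j ≤ π_{k+1}` for all
`j > k`, and `∑_{j=k+1}^n π_j ≤ 1`.  If `Y_j` is Poisson with parameter `m π_j` for
each `j > k`, then `μ(y) := ∑_{j=k+1}^n P(Y_j ≥ y) ≤ (1/(ε π_{k+1})) ((1-ε)e^ε)^{ma}`. -/
theorem mu_y_upper_bound
    {Ω : Type*} [MeasurableSpace Ω] (μ : Measure Ω) [IsProbabilityMeasure μ]
    (n k : ℕ) (hk : 1 ≤ k) (hkn : k < n)
    (m a : ℝ) (hm : 0 < m) (ha : 0 < a)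
    (y : ℕ) (hy : (y : ℝ) = m * a) (hy1 : 1 < y)
    (ε : ℝ) (hε : 1 / (y : ℝ) < ε) (hε1 : ε < 1)
    (pr : ℕ → ℝ) (hprk : pr (k + 1) = (1 - ε) * a)
    (hpos : ∀ j ∈ Finset.Icc (k + 1) n, 0 < pr j)
    (hmax : ∀ j ∈ Finset.Icc (k + 1) n, pr j ≤ pr (k + 1))
    (hsum : ∑ j ∈ Finset.Icc (k + 1) n, pr j ≤ 1)
    (Y : ℕ → Ω → ℕ) (hmeas : ∀ j, Measurable (Y j))
    (hpois : ∀ j ∈ Finset.Icc (k + 1) n, ∀ i : ℕ,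
      (μ {ω | Y j ω = i}).toReal
        = (m * pr j) ^ i / (Nat.factorial i) * Real.exp (-(m * pr j))) :
    ∑ j ∈ Finset.Icc (k + 1) n, (μ {ω | y ≤ Y j ω}).toReal
      ≤ (1 / (ε * pr (k + 1))) * ((1 - ε) * Real.exp ε) ^ (m * a) := by
  have hyR : (0:ℝ) < (y:ℝ) := by positivity
  have hε0 : 0 < ε := lt_trans (by positivity) hε
  have hεy : 1 < ε * y := by
    rw [div_lt_iff₀ hyR] at hε; linarith
  have hk1 : k + 1 ∈ Finset.Icc (k + 1) n := by
    simp only [Finset.mem_Icc]; omega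
  have hprk_pos : 0 < pr (k + 1) := hpos _ hk1
  set lam : ℝ := m * pr (k + 1) with hlam_def
  have hlam_pos : 0 < lam := mul_pos hm hprk_pos
  have hlam_eq : lam = (1 - ε) * y := by rw [hlam_def, hprk, hy]; ring
  set N : ℕ := y - 1 with hNdef
  have hyN : y = N + 1 := by omega
  have hNR : (N:ℝ) = (y:ℝ) - 1 := by rw [hyN]; push_cast; ring
  have hlamN : lam ≤ (N:ℝ) := by rw [hlam_eq, hNR]; nlinarith
  have h1ε : (0:ℝ) < 1 - ε := by linarith
  set B : ℝ := ((1 - ε) * Real.exp ε) ^ y with hBdef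
  have hB_pos : 0 < B := by
    rw [hBdef]; exact pow_pos (mul_pos h1ε (Real.exp_pos ε)) y
  have hflam : lam ^ y / y.factorial * Real.exp (-lam) ≤ B := by
    have h1 : (y:ℝ) ^ y / y.factorial ≤ Real.exp y := pow_div_fact_le_exp y
    have hfacpos : (0:ℝ) < (y.factorial : ℝ) := Nat.cast_pos.mpr y.factorial_pos
    have hyypos : (0:ℝ) < (y:ℝ) ^ y := pow_pos hyR y
    have h2 : (1:ℝ) / y.factorial ≤ Real.exp y / (y:ℝ) ^ y := by
      rw [div_le_div_iff₀ hfacpos hyypos]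
      rw [div_le_iff₀ hfacpos] at h1; linarith
    have h3 : lam ^ y / y.factorial * Real.exp (-lam)
        ≤ lam ^ y * (Real.exp y / (y:ℝ) ^ y) * Real.exp (-lam) := by
      apply mul_le_mul_of_nonneg_right _ (Real.exp_pos _).le
      calc lam ^ y / y.factorial = lam ^ y * (1 / y.factorial) := by ring
        _ ≤ lam ^ y * (Real.exp y / (y:ℝ) ^ y) :=
            mul_le_mul_of_nonneg_left h2 (pow_nonneg hlam_pos.le y)
    refine h3.trans (le_of_eq ?_)
    have hexp : Real.exp (y:ℝ) * Real.exp (-((1 - ε) * y)) = Real.exp ε ^ y := by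
      rw [← Real.exp_add]
      have h : (y:ℝ) + -((1 - ε) * y) = (y:ℝ) * ε := by ring
      rw [h, Real.exp_nat_mul]
    rw [hlam_eq, hBdef, mul_pow, mul_pow]
    have h4 : (1 - ε) ^ y * (y:ℝ) ^ y * (Real.exp (y:ℝ) / (y:ℝ) ^ y) * Real.exp (-((1 - ε) * y))
        = (1 - ε) ^ y * (Real.exp (y:ℝ) * Real.exp (-((1 - ε) * y))) := by
      field_simp
    rw [h4, hexp]
  have key : ∀ j ∈ Finset.Icc (k + 1) n,
      (μ {ω | y ≤ Y j ω}).toReal ≤ pr j * ((1 / (ε * pr (k + 1))) * B) := by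
    intro j hj
    have hprj : 0 < pr j := hpos j hj
    have hlamj_pos : 0 < m * pr j := mul_pos hm hprj
    have hlamj_le : m * pr j ≤ lam := mul_le_mul_of_nonneg_left (hmax j hj) hm.le
    have hc : m * pr j ≤ (1 - ε) * y := by rw [← hlam_eq]; exact hlamj_le
    have htail := poisson_tail_le μ (Y j) (m * pr j) hlamj_pos y (by omega)
      (1 - ε) (by linarith) (by linarith) hc (hpois j hj)
    have hone : (1:ℝ) - (1 - ε) = ε := by ring
    rw [hone] at htail
    have hmono : (m * pr j) ^ N * Real.exp (-(m * pr j)) ≤ lam ^ N * Real.exp (-lam) :=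
      pow_mul_exp_neg_mono N (m * pr j) lam hlamj_pos hlamj_le hlamN
    have hfacpos : (0:ℝ) < (y.factorial : ℝ) := Nat.cast_pos.mpr y.factorial_pos
    have hstep : (m * pr j) ^ y / y.factorial * Real.exp (-(m * pr j))
        ≤ (m * pr j) / lam * (lam ^ y / y.factorial * Real.exp (-lam)) := by
      have h1 : (m * pr j) ^ y * Real.exp (-(m * pr j))
          ≤ (m * pr j) * (lam ^ N * Real.exp (-lam)) := by
        calc (m * pr j) ^ y * Real.exp (-(m * pr j))
            = (m * pr j) * ((m * pr j) ^ N * Real.exp (-(m * pr j))) := by rw [hyN]; ring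
          _ ≤ (m * pr j) * (lam ^ N * Real.exp (-lam)) :=
              mul_le_mul_of_nonneg_left hmono hlamj_pos.le
      have h2 : (m * pr j) / lam * (lam ^ y / y.factorial * Real.exp (-lam))
          = (m * pr j) * (lam ^ N * Real.exp (-lam)) / y.factorial := by
        rw [hyN]; field_simp; ring
      have h3 : (m * pr j) ^ y / y.factorial * Real.exp (-(m * pr j))
          = (m * pr j) ^ y * Real.exp (-(m * pr j)) / y.factorial := by ring
      rw [h2, h3]
      gcongr
    calc (μ {ω | y ≤ Y j ω}).toReal
        ≤ (m * pr j) ^ y / y.factorial * Real.exp (-(m * pr j)) * (1 / ε) := htail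
      _ ≤ (m * pr j) / lam * (lam ^ y / y.factorial * Real.exp (-lam)) * (1 / ε) :=
          mul_le_mul_of_nonneg_right hstep (one_div_nonneg.mpr hε0.le)
      _ ≤ (m * pr j) / lam * B * (1 / ε) := by
          apply mul_le_mul_of_nonneg_right _ (one_div_nonneg.mpr hε0.le)
          exact mul_le_mul_of_nonneg_left hflam (div_nonneg hlamj_pos.le hlam_pos.le)
      _ = pr j * ((1 / (ε * pr (k + 1))) * B) := by
          rw [hlam_def]
          field_simp
  have hfinal : ∑ j ∈ Finset.Icc (k + 1) n, (μ {ω | y ≤ Y j ω}).toReal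
      ≤ (1 / (ε * pr (k + 1))) * B := by
    calc ∑ j ∈ Finset.Icc (k + 1) n, (μ {ω | y ≤ Y j ω}).toReal
        ≤ ∑ j ∈ Finset.Icc (k + 1) n, pr j * ((1 / (ε * pr (k + 1))) * B) :=
          Finset.sum_le_sum key
      _ = (∑ j ∈ Finset.Icc (k + 1) n, pr j) * ((1 / (ε * pr (k + 1))) * B) :=
          (Finset.sum_mul _ _ _).symm
      _ ≤ 1 * ((1 / (ε * pr (k + 1))) * B) :=
          mul_le_mul_of_nonneg_right hsum
            (mul_nonneg (one_div_nonneg.mpr (mul_pos hε0 hprk_pos).le) hB_pos.le)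
      _ = (1 / (ε * pr (k + 1))) * B := one_mul _
  have hrw : ((1 - ε) * Real.exp ε) ^ (m * a) = B := by
    rw [hBdef, ← hy, Real.rpow_natCast]
  rw [hrw]
  exact hfinal
end

section
/- Let n > k ≥ 1, let α ∈ (0,1) with k π_{k+1} < 1, let m > 0 and a > 0 be reals with y := ma an integer, y > 1, let ε ∈ (1/y, 1), and let π_{k+1}, …, π_n be positive reals with π_{k+1} = (1−ε)a, π_j ≤ π_{k+1} for all j > k, and ∑_{j=k+1}^n π_j ≤ 1. For j > k let Y_j be a Poisson random variable with parameter m π_j. If in addition m > 2 a^{−1} ε^{−2} · ( −log( ε π_{k+1} α k ) ), then ∑_{j=k+1}^{n} P( Y_j ≥ y ) < α k. -/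
open MeasureTheory

/-- Monotonicity of `x ↦ x^t e^{-x}` on `(0, t]`. -/
lemma aux_pow_exp_mono (t : ℕ) (x z : ℝ) (hx : 0 < x) (hxz : x ≤ z) (hzt : z ≤ (t : ℝ)) :
    x ^ t * Real.exp (-x) ≤ z ^ t * Real.exp (-z) := by
  have hz : 0 < z := lt_of_lt_of_le hx hxz
  have hlog : Real.log x - Real.log z ≤ x / z - 1 := by
    have h := Real.log_le_sub_one_of_pos (div_pos hx hz)
    rwa [Real.log_div (ne_of_gt hx) (ne_of_gt hz)] at h
  have hkey : z - x ≤ (t : ℝ) * (Real.log z - Real.log x) := by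
    have h1 : z * (Real.log x - Real.log z) ≤ z * (x / z - 1) :=
      mul_le_mul_of_nonneg_left hlog hz.le
    have h2 : z * (x / z - 1) = x - z := by field_simp
    have h3 : 0 ≤ Real.log z - Real.log x := sub_nonneg.2 (Real.log_le_log hx hxz)
    nlinarith
  calc x ^ t * Real.exp (-x) = Real.exp ((t : ℝ) * Real.log x + -x) := by
        rw [Real.exp_add, Real.exp_nat_mul, Real.exp_log hx]
    _ ≤ Real.exp ((t : ℝ) * Real.log z + -z) := by
        apply Real.exp_le_exp.2; nlinarith
    _ = z ^ t * Real.exp (-z) := by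
        rw [Real.exp_add, Real.exp_nat_mul, Real.exp_log hz]

/-- Second order bound for the logarithm: `log(1-ε) + ε ≤ -ε²/2` on `(0,1)`. -/
lemma aux_log_bound {ε : ℝ} (h0 : 0 < ε) (h1 : ε < 1) :
    Real.log (1 - ε) + ε ≤ -(ε ^ 2 / 2) := by
  set f : ℝ → ℝ := fun x => Real.log (1 - x) + x + x ^ 2 / 2 with hf
  have hder : ∀ x ∈ Set.Ioo (0 : ℝ) ε, HasDerivAt f (-1 / (1 - x) + 1 + x) x := by
    intro x hx
    have hx1 : x < 1 := lt_trans hx.2 h1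
    have hne : (1 : ℝ) - x ≠ 0 := ne_of_gt (by linarith)
    have h1d : HasDerivAt (fun x : ℝ => 1 - x) (-1) x := by
      simpa using (hasDerivAt_id x).const_sub 1
    have h2d : HasDerivAt (fun x : ℝ => Real.log (1 - x)) (-1 / (1 - x)) x :=
      h1d.log hne
    have h3d : HasDerivAt (fun x : ℝ => x ^ 2 / 2) x x := by
      have := (hasDerivAt_pow 2 x).div_const 2
      simpa using this
    exact (h2d.add (hasDerivAt_id x)).add h3d
  have hcont : ContinuousOn f (Set.Icc 0 ε) := by
    apply ContinuousOn.add
    apply ContinuousOn.add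
    · apply ContinuousOn.log
      · exact (continuous_const.sub continuous_id).continuousOn
      · intro x hx
        have hx1 : x < 1 := lt_of_le_of_lt hx.2 h1
        show (1 : ℝ) - x ≠ 0
        exact ne_of_gt (by linarith)
    · exact continuousOn_id
    · exact (Continuous.continuousOn (by continuity))
  have hmono : AntitoneOn f (Set.Icc 0 ε) := by
    apply antitoneOn_of_deriv_nonpos (convex_Icc 0 ε) hcont
    · intro x hx
      rw [interior_Icc] at hx
      exact (hder x hx).differentiableAt.differentiableWithinAt
    · intro x hx
      rw [interior_Icc] at hx
      rw [(hder x hx).deriv]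
      have hx1 : x < 1 := lt_trans hx.2 h1
      have hne : (1 : ℝ) - x ≠ 0 := ne_of_gt (by linarith)
      have heq : -1 / (1 - x) + 1 + x = -(x ^ 2) / (1 - x) := by
        field_simp
        ring
      rw [heq]
      apply div_nonpos_of_nonpos_of_nonneg
      · nlinarith [sq_nonneg x]
      · linarith
  have h := hmono (Set.left_mem_Icc.2 h0.le) (Set.right_mem_Icc.2 h0.le) h0.le
  have h0' : f 0 = 0 := by simp [hf]
  have he : f ε = Real.log (1 - ε) + ε + ε ^ 2 / 2 := rfl
  rw [he, h0'] at h
  linarith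

/-- `y^y ≤ e^y · y!`. -/
lemma aux_pow_le_exp_mul_factorial (y : ℕ) :
    (y : ℝ) ^ y ≤ Real.exp y * (Nat.factorial y : ℝ) := by
  have hfac : (0 : ℝ) < (Nat.factorial y : ℝ) := by
    exact_mod_cast Nat.factorial_pos y
  have h2 : (y : ℝ) ^ y / (Nat.factorial y : ℝ)
      ≤ ∑ i ∈ Finset.range (y + 1), (y : ℝ) ^ i / (Nat.factorial i : ℝ) :=
    Finset.single_le_sum (f := fun i => (y : ℝ) ^ i / (Nat.factorial i : ℝ))
      (fun i _ => by positivity) (Finset.self_mem_range_succ y)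
  have h := Real.sum_le_exp_of_nonneg (by positivity : (0 : ℝ) ≤ (y : ℝ)) (y + 1)
  have := h2.trans h
  rw [div_le_iff₀ hfac] at this
  linarith [this]

set_option maxHeartbeats 1000000 in
/-- **Theorem 4 (ii): sufficient number of Monte Carlo runs.**
Under the setting of the Poissonized End Point algorithm (`n > k ≥ 1`, `α ∈ (0,1)`
with `k π_{k+1} < 1`, `m, a > 0` with `y := ma` an integer `> 1`, `ε ∈ (1/y, 1)`,
`π_{k+1} = (1-ε) a`, `π_j ≤ π_{k+1}`, `∑_{j>k} π_j ≤ 1`, and `Y_j` Poisson with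
parameter `m π_j`), if moreover `m > 2 a⁻¹ ε⁻² (-log(ε π_{k+1} α k))`, then
`∑_{j=k+1}^n P(Y_j ≥ y) < α k`. -/
theorem sufficient_sample_size
    {Ω : Type*} [MeasurableSpace Ω] (μ : Measure Ω) [IsProbabilityMeasure μ]
    (n k : ℕ) (hk : 1 ≤ k) (hkn : k < n)
    (α : ℝ) (hα : α ∈ Set.Ioo (0 : ℝ) 1)
    (m a : ℝ) (hm : 0 < m) (ha : 0 < a)
    (y : ℕ) (hy : (y : ℝ) = m * a) (hy1 : 1 < y)
    (ε : ℝ) (hε : 1 / (y : ℝ) < ε) (hε1 : ε < 1)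
    (pr : ℕ → ℝ) (hprk : pr (k + 1) = (1 - ε) * a)
    (hkpr : (k : ℝ) * pr (k + 1) < 1)
    (hpos : ∀ j ∈ Finset.Icc (k + 1) n, 0 < pr j)
    (hmax : ∀ j ∈ Finset.Icc (k + 1) n, pr j ≤ pr (k + 1))
    (hsum : ∑ j ∈ Finset.Icc (k + 1) n, pr j ≤ 1)
    (Y : ℕ → Ω → ℕ) (hmeas : ∀ j, Measurable (Y j))
    (hpois : ∀ j ∈ Finset.Icc (k + 1) n, ∀ i : ℕ,
      (μ {ω | Y j ω = i}).toReal
        = (m * pr j) ^ i / (Nat.factorial i) * Real.exp (-(m * pr j)))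
    (hm2 : m > 2 * a⁻¹ * (ε ^ 2)⁻¹ * (-Real.log (ε * pr (k + 1) * α * k))) :
    ∑ j ∈ Finset.Icc (k + 1) n, (μ {ω | y ≤ Y j ω}).toReal < α * k := by
  -- basic positivity facts
  have hy0 : (0 : ℝ) < (y : ℝ) := by exact_mod_cast Nat.lt_of_lt_of_le Nat.zero_lt_one hy1.le
  have hε0 : 0 < ε := lt_trans (by positivity) hε
  have h1ε : (0 : ℝ) < 1 - ε := by linarith
  have hεy : 1 < ε * (y : ℝ) := by
    rw [div_lt_iff₀ hy0] at hε; linarith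
  have hfacpos : (0 : ℝ) < (Nat.factorial y : ℝ) := by exact_mod_cast Nat.factorial_pos y
  have hπpos : 0 < pr (k + 1) := by rw [hprk]; exact mul_pos h1ε ha
  have hk0 : (0 : ℝ) < (k : ℝ) := by exact_mod_cast hk
  have hα0 := hα.1
  -- the constant appearing in the per-node bound
  set B : ℝ := (1 - ε) * (y : ℝ) with hBdef
  have hB0 : 0 < B := mul_pos h1ε hy0
  set C : ℝ := B ^ (y - 1) * Real.exp (-B) / (Nat.factorial y : ℝ) with hCdef
  have hC0 : 0 < C := div_pos (mul_pos (pow_pos hB0 _) (Real.exp_pos _)) hfacpos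
  have hBy1 : B ≤ ((y - 1 : ℕ) : ℝ) := by
    have : ((y - 1 : ℕ) : ℝ) = (y : ℝ) - 1 := by
      have : (1 : ℕ) ≤ y := hy1.le
      push_cast [Nat.cast_sub this]
      ring
    rw [this, hBdef]; nlinarith
  -- Step 1: per-node tail bound
  have key : ∀ j ∈ Finset.Icc (k + 1) n,
      (μ {ω | y ≤ Y j ω}).toReal ≤ m * pr j * (C * ε⁻¹) := by
    intro j hj
    have hprj := hpos j hj
    have hL : 0 < m * pr j := mul_pos hm hprj
    have hLB : m * pr j ≤ B := by
      calc m * pr j ≤ m * pr (k + 1) := mul_le_mul_of_nonneg_left (hmax j hj) hm.le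
        _ = B := by rw [hprk, hBdef, hy]; ring
    have hset : {ω | y ≤ Y j ω} = ⋃ i : ℕ, {ω | Y j ω = y + i} := by
      ext ω
      simp only [Set.mem_setOf_eq, Set.mem_iUnion]
      constructor
      · intro h; exact ⟨Y j ω - y, by omega⟩
      · rintro ⟨i, hi⟩; omega
    have hmb : ∀ i : ℕ, MeasurableSet {ω | Y j ω = y + i} :=
      fun i => hmeas j (measurableSet_singleton (y + i))
    have hdisj : Pairwise (Function.onFun Disjoint fun i => {ω | Y j ω = y + i}) := by
      intro i i' hii'
      simp only [Function.onFun, Set.disjoint_left, Set.mem_setOf_eq]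
      intro ω h h'
      exact hii' (by omega)
    rw [hset, measure_iUnion hdisj hmb,
      ENNReal.tsum_toReal_eq (fun i => measure_ne_top μ _)]
    -- pointwise bound on the Poisson probabilities
    have hbound : ∀ i : ℕ,
        (μ {ω | Y j ω = y + i}).toReal ≤ m * pr j * C * (1 - ε) ^ i := by
      intro i
      rw [hpois j hj (y + i)]
      have hfacle : ((Nat.factorial y : ℝ)) * (y : ℝ) ^ i ≤ (Nat.factorial (y + i) : ℝ) := by
        have hnat := Nat.factorial_mul_pow_le_factorial (m := y) (n := i)
        calc (Nat.factorial y : ℝ) * (y : ℝ) ^ i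
            ≤ (Nat.factorial y : ℝ) * ((y : ℝ) + 1) ^ i := by
              apply mul_le_mul_of_nonneg_left _ hfacpos.le
              exact pow_le_pow_left₀ hy0.le (by linarith) i
          _ = ((Nat.factorial y * (y + 1) ^ i : ℕ) : ℝ) := by push_cast; ring
          _ ≤ _ := Nat.cast_le.2 hnat
      have hden : (0 : ℝ) < (Nat.factorial y : ℝ) * (y : ℝ) ^ i :=
        mul_pos hfacpos (pow_pos hy0 i)
      have hstep1 : (m * pr j) ^ (y + i) / (Nat.factorial (y + i) : ℝ)
            * Real.exp (-(m * pr j))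
          ≤ (m * pr j) ^ (y + i) / ((Nat.factorial y : ℝ) * (y : ℝ) ^ i)
            * Real.exp (-(m * pr j)) := by
        apply mul_le_mul_of_nonneg_right _ (Real.exp_pos _).le
        exact div_le_div_of_nonneg_left (by positivity) hden hfacle
      have hsplit : (m * pr j) ^ (y + i) / ((Nat.factorial y : ℝ) * (y : ℝ) ^ i)
            * Real.exp (-(m * pr j))
          = m * pr j * ((m * pr j) ^ (y - 1) * Real.exp (-(m * pr j)))
              / (Nat.factorial y : ℝ) * ((m * pr j) / (y : ℝ)) ^ i := by
        have hyy : y + i = 1 + (y - 1) + i := by omega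
        rw [hyy, pow_add, pow_add, pow_one, div_pow]
        field_simp
      have hmono := aux_pow_exp_mono (y - 1) (m * pr j) B hL hLB hBy1
      have hratio : ((m * pr j) / (y : ℝ)) ^ i ≤ (1 - ε) ^ i := by
        apply pow_le_pow_left₀ (by positivity)
        rw [div_le_iff₀ hy0]
        calc m * pr j ≤ B := hLB
          _ = (1 - ε) * (y : ℝ) := hBdef
      calc (m * pr j) ^ (y + i) / (Nat.factorial (y + i) : ℝ) * Real.exp (-(m * pr j))
          ≤ (m * pr j) ^ (y + i) / ((Nat.factorial y : ℝ) * (y : ℝ) ^ i)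
              * Real.exp (-(m * pr j)) := hstep1
        _ = m * pr j * ((m * pr j) ^ (y - 1) * Real.exp (-(m * pr j)))
              / (Nat.factorial y : ℝ) * ((m * pr j) / (y : ℝ)) ^ i := hsplit
        _ ≤ m * pr j * (B ^ (y - 1) * Real.exp (-B))
              / (Nat.factorial y : ℝ) * (1 - ε) ^ i := by
            apply mul_le_mul
            · exact (div_le_div_iff_of_pos_right hfacpos).2 (mul_le_mul_of_nonneg_left hmono hL.le)
            · exact hratio
            · positivity
            · positivity
        _ = m * pr j * C * (1 - ε) ^ i := by rw [hCdef]; ring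
    -- sum up the geometric series
    have hgeo : Summable (fun i : ℕ => (1 - ε) ^ i) :=
      summable_geometric_of_lt_one h1ε.le (by linarith)
    have hgsum : Summable (fun i : ℕ => m * pr j * C * (1 - ε) ^ i) := hgeo.mul_left _
    have hlsum : Summable (fun i : ℕ => (μ {ω | Y j ω = y + i}).toReal) :=
      Summable.of_nonneg_of_le (fun i => ENNReal.toReal_nonneg) hbound hgsum
    calc ∑' i : ℕ, (μ {ω | Y j ω = y + i}).toReal
        ≤ ∑' i : ℕ, m * pr j * C * (1 - ε) ^ i := Summable.tsum_le_tsum hbound hlsum hgsum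
      _ = m * pr j * C * ε⁻¹ := by
          rw [tsum_mul_left, tsum_geometric_of_lt_one h1ε.le (by linarith)]
          rw [show (1 : ℝ) - (1 - ε) = ε by ring]
      _ = m * pr j * (C * ε⁻¹) := by ring
  -- Step 2: the final numeric bound
  have hexp : Real.exp (-(m * a * ε ^ 2 / 2)) < ε * pr (k + 1) * α * (k : ℝ) := by
    have hαk : 0 < ε * pr (k + 1) * α * (k : ℝ) :=
      mul_pos (mul_pos (mul_pos hε0 hπpos) hα0) hk0
    rw [← Real.exp_log hαk, Real.exp_lt_exp]
    set L : ℝ := Real.log (ε * pr (k + 1) * α * (k : ℝ)) with hLdef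
    have h2 : 2 * a⁻¹ * (ε ^ 2)⁻¹ * (-L) = 2 * (-L) / (a * ε ^ 2) := by
      field_simp
    rw [h2] at hm2
    have h4 : 2 * (-L) < m * (a * ε ^ 2) := (div_lt_iff₀ (by positivity)).1 hm2
    nlinarith
  have hfinal : m * (C * ε⁻¹) < α * (k : ℝ) := by
    have heq : m * (C * ε⁻¹)
        = B ^ y * Real.exp (-B) / ((Nat.factorial y : ℝ) * (ε * pr (k + 1))) := by
      have hm' : m = (y : ℝ) / a := (eq_div_iff ha.ne').2 hy.symm
      have hpowy : B ^ y = B ^ (y - 1) * B := by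
        rw [← pow_succ]; congr 1; omega
      rw [hCdef, hm', hprk, hpowy, hBdef]
      field_simp
    have hle2 : B ^ y * Real.exp (-B)
        ≤ Real.exp (-(m * a * ε ^ 2 / 2)) * (Nat.factorial y : ℝ) := by
      have h5 := aux_pow_le_exp_mul_factorial y
      have h6 := aux_log_bound hε0 hε1
      have hpw : (0 : ℝ) ≤ (1 - ε) ^ y := pow_nonneg h1ε.le y
      have hE : ((1 : ℝ) - ε) ^ y = Real.exp ((y : ℝ) * Real.log (1 - ε)) := by
        rw [Real.exp_nat_mul, Real.exp_log h1ε]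
      calc B ^ y * Real.exp (-B) = (1 - ε) ^ y * (y : ℝ) ^ y * Real.exp (-B) := by
            rw [hBdef, mul_pow]
        _ ≤ (1 - ε) ^ y * (Real.exp y * (Nat.factorial y : ℝ)) * Real.exp (-B) :=
            mul_le_mul_of_nonneg_right (mul_le_mul_of_nonneg_left h5 hpw) (Real.exp_pos _).le
        _ = Real.exp ((y : ℝ) * Real.log (1 - ε) + (y : ℝ) + -B) * (Nat.factorial y : ℝ) := by
            rw [hE, Real.exp_add, Real.exp_add]; ring
        _ ≤ Real.exp (-(m * a * ε ^ 2 / 2)) * (Nat.factorial y : ℝ) := by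
            apply mul_le_mul_of_nonneg_right _ hfacpos.le
            apply Real.exp_le_exp.2
            have hmul : (y : ℝ) * (Real.log (1 - ε) + ε) ≤ (y : ℝ) * (-(ε ^ 2 / 2)) :=
              mul_le_mul_of_nonneg_left h6 (Nat.cast_nonneg y)
            rw [hy] at hmul
            rw [hBdef, hy]
            nlinarith [hmul]
    have hden : (0 : ℝ) < (Nat.factorial y : ℝ) * (ε * pr (k + 1)) :=
      mul_pos hfacpos (mul_pos hε0 hπpos)
    calc m * (C * ε⁻¹)
        = B ^ y * Real.exp (-B) / ((Nat.factorial y : ℝ) * (ε * pr (k + 1))) := heq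
      _ ≤ Real.exp (-(m * a * ε ^ 2 / 2)) * (Nat.factorial y : ℝ)
            / ((Nat.factorial y : ℝ) * (ε * pr (k + 1))) :=
          (div_le_div_iff_of_pos_right hden).2 hle2
      _ = Real.exp (-(m * a * ε ^ 2 / 2)) / (ε * pr (k + 1)) := by
          rw [mul_comm (Real.exp _) (Nat.factorial y : ℝ), mul_div_mul_left _ _ hfacpos.ne']
      _ < (ε * pr (k + 1) * α * (k : ℝ)) / (ε * pr (k + 1)) :=
          (div_lt_div_iff_of_pos_right (mul_pos hε0 hπpos)).2 hexp
      _ = α * (k : ℝ) := by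
          field_simp
  calc ∑ j ∈ Finset.Icc (k + 1) n, (μ {ω | y ≤ Y j ω}).toReal
      ≤ ∑ j ∈ Finset.Icc (k + 1) n, m * pr j * (C * ε⁻¹) := Finset.sum_le_sum key
    _ = (∑ j ∈ Finset.Icc (k + 1) n, pr j) * (m * (C * ε⁻¹)) := by
        rw [Finset.sum_mul]
        exact Finset.sum_congr rfl (fun j _ => by ring)
    _ ≤ 1 * (m * (C * ε⁻¹)) := by
        apply mul_le_mul_of_nonneg_right hsum
        positivity
    _ = m * (C * ε⁻¹) := one_mul _
    _ < α * (k : ℝ) := hfinal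
end
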